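/- Fix γ, τ ≤ 0.1 and scaling parameters 1 ≤ ν₁ ≤ 2 and ν₂ ≥ 1. Let R₁ be the set of pairs (μ, Σ) with (μ, Σ) ≈_{γ,τ} (0, I_d), and let R₂ be the set of pairs (μ, Σ) with (μ, Σ) ≈_{ν₁·γ, ν₂·τ} (0, I_d). Then nvol(R₂) ≤ ν₁^{2d²} · ν₂^d · nvol(R₁). -/

import Mathlib

open MeasureTheory ProbabilityTheory Matrix Real
open scoped ENNReal

noncomputable section

/-- The `ℓ²`-operator norm of a real `d × d` matrix. -/
def opNorm {d : ℕ} (M : Matrix (Fin d) (Fin d) ℝ) : ℝ :=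
  ‖(Matrix.toEuclideanCLM (𝕜 := ℝ) M)‖

/-- The Frobenius norm of a real `d × d` matrix. -/
def frobNorm {d : ℕ} (M : Matrix (Fin d) (Fin d) ℝ) : ℝ :=
  Real.sqrt (∑ i, ∑ j, (M i j) ^ 2)

/-- The Euclidean norm of a vector in `ℝ^d`. -/
def vnorm {d : ℕ} (v : Fin d → ℝ) : ℝ := Real.sqrt (∑ i, (v i) ^ 2)

open scoped MatrixOrder in
/-- The positive semidefinite square root of a matrix (junk value `0` if the matrix is not
positive semidefinite). -/
def msqrt {d : ℕ} (S : Matrix (Fin d) (Fin d) ℝ) : Matrix (Fin d) (Fin d) ℝ :=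
  letI := Classical.propDecidable S.PosSemidef
  if h : S.PosSemidef then CFC.sqrt S else 0

/-- `Σ^{-1/2}`, the inverse of the positive square root. -/
def sqrtInv {d : ℕ} (S : Matrix (Fin d) (Fin d) ℝ) : Matrix (Fin d) (Fin d) ℝ :=
  (msqrt S)⁻¹

/-- `(μ̂, Σ̂) ≈_{γ,ρ,τ} (μ, Σ)`: spectral, Frobenius, and Mahalanobis closeness. -/
def approx {d : ℕ} (γ ρ τ : ℝ) (p q : (Fin d → ℝ) × Matrix (Fin d) (Fin d) ℝ) : Prop :=
  opNorm (sqrtInv q.2 * p.2 * sqrtInv q.2 - 1) ≤ γ ∧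
  frobNorm (sqrtInv q.2 * p.2 * sqrtInv q.2 - 1) ≤ ρ ∧
  vnorm (sqrtInv q.2 *ᵥ (p.1 - q.1)) ≤ τ

/-- The index set for the upper-triangular entries of a `d × d` matrix. -/
abbrev UT (d : ℕ) := { p : Fin d × Fin d // p.1 ≤ p.2 }

/-- `Proj(μ, Σ)`: the coordinates of `μ` together with the upper-triangular entries of `Σ`. -/
def proj {d : ℕ} (q : (Fin d → ℝ) × Matrix (Fin d) (Fin d) ℝ) :
    (Fin d → ℝ) × (UT d → ℝ) :=
  (q.1, fun p => q.2 p.1.1 p.1.2)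

/-- Reconstruct the determinant of the symmetric matrix from its projected coordinates. -/
def detAt {d : ℕ} (θ : (Fin d → ℝ) × (UT d → ℝ)) : ℝ :=
  (Matrix.of fun i j : Fin d =>
    if h : i ≤ j then θ.2 ⟨(i, j), h⟩ else θ.2 ⟨(j, i), le_of_not_ge h⟩).det

/-- The normalized volume `nvol(Ω) = ∫_{Proj(Ω)} det(Σ)^{-(d+2)/2} dθ`. -/
def nvol {d : ℕ} (Ω : Set ((Fin d → ℝ) × Matrix (Fin d) (Fin d) ℝ)) : ℝ≥0∞ :=
  ∫⁻ θ in proj '' Ω, ENNReal.ofReal (detAt θ ^ (-((d : ℝ) + 2) / 2)) ∂volume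



/-!
The affine map `(μ, Σ) ↦ (ν₂ μ, I + ν₁ (Σ - I))` carries the `(γ, τ)`-neighbourhood of
`(0, I)` onto the `(ν₁ γ, ν₂ τ)`-neighbourhood, and in the coordinates `Proj` it has Jacobian
`ν₂ ^ d * ν₁ ^ (d (d + 1) / 2)`. On the smaller neighbourhood every eigenvalue `λ` of `Σ` lies
within `0.1` of `1`, where `λ ≤ κ (1 + ν₁ (λ - 1))` with `κ = 1 + (ν₁ - 1) / 8`, so the density
`det ^ (-(d + 2) / 2)` grows under the map by at most `κ ^ (d (d + 2) / 2) ≤ ν₁ ^ (d ^ 2)`, as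
`κ ^ 2 ≤ ν₁`. The change of variables formula turns these two bounds into the claim.
-/

open scoped Matrix.Norms.L2Operator

theorem opNorm_smul {d : ℕ} (c : ℝ) (M : Matrix (Fin d) (Fin d) ℝ) :
    opNorm (c • M) = |c| * opNorm M :=
  norm_smul c M

theorem frobNorm_smul {d : ℕ} (c : ℝ) (M : Matrix (Fin d) (Fin d) ℝ) :
    frobNorm (c • M) = |c| * frobNorm M := by
  simp only [frobNorm, Matrix.smul_apply, smul_eq_mul, mul_pow, ← Finset.mul_sum]
  rw [Real.sqrt_mul (sq_nonneg c), Real.sqrt_sq_eq_abs]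

theorem vnorm_smul {d : ℕ} (c : ℝ) (v : Fin d → ℝ) : vnorm (c • v) = |c| * vnorm v := by
  simp only [vnorm, Pi.smul_apply, smul_eq_mul, mul_pow, ← Finset.mul_sum]
  rw [Real.sqrt_mul (sq_nonneg c), Real.sqrt_sq_eq_abs]

theorem rpow_neg_le_pow_mul_rpow_neg {x y c s : ℝ} (hx : 0 < x) (hxy : x ≤ c * y) (hc : 1 ≤ c)
    (hs : 0 ≤ s) {m : ℕ} (hsm : s ≤ m) : y ^ (-s) ≤ c ^ m * x ^ (-s) := by
  have hc0 : 0 < c := by linarith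
  calc y ^ (-s) ≤ (x / c) ^ (-s) :=
        Real.rpow_le_rpow_of_nonpos (by positivity) (by rwa [div_le_iff₀' hc0]) (by linarith)
    _ = c ^ s * x ^ (-s) := by
        rw [Real.div_rpow hx.le hc0.le, Real.rpow_neg hc0.le, div_eq_mul_inv, inv_inv, mul_comm]
    _ ≤ c ^ m * x ^ (-s) := by
        gcongr
        rw [← Real.rpow_natCast]
        exact Real.rpow_le_rpow_of_exponent_le hc hsm

theorem le_mul_one_add_mul_sub_one {x ν : ℝ} (hx : |x - 1| ≤ 0.1) (hν : 1 ≤ ν) (hν' : ν ≤ 2) :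
    x ≤ (1 + (ν - 1) / 8) * (1 + ν * (x - 1)) := by
  -- With a = ν - 1 the difference is (a / 8) * (1 + (9 + a) * (x - 1)) ≥ a * (1 - a) / 80.
  obtain ⟨h₁, h₂⟩ := abs_le.mp hx
  have hx₀ : (0 : ℝ) ≤ x - 1 + 0.1 := by linarith
  nlinarith [mul_nonneg (sub_nonneg.mpr hν) (sub_nonneg.mpr hν'),
    mul_nonneg (sub_nonneg.mpr hν) hx₀,
    mul_nonneg (mul_nonneg (sub_nonneg.mpr hν) (sub_nonneg.mpr hν')) hx₀]

theorem pow_mul_succ_le_pow_sq {κ ν : ℝ} (hκ : 1 ≤ κ) (hκν : κ ^ 2 ≤ ν) (d : ℕ) :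
    κ ^ (d * (d + 1)) ≤ ν ^ d ^ 2 := by
  calc κ ^ (d * (d + 1)) ≤ κ ^ (2 * d ^ 2) := pow_le_pow_right₀ hκ (by nlinarith)
    _ = (κ ^ 2) ^ d ^ 2 := pow_mul κ 2 (d ^ 2)
    _ ≤ ν ^ d ^ 2 := by gcongr

section Hermitian

variable {n : Type*} [Fintype n] [DecidableEq n]

theorem Matrix.IsHermitian.det_cfc {A : Matrix n n ℝ} (hA : A.IsHermitian) (f : ℝ → ℝ) :
    (cfc f A).det = ∏ i, f (hA.eigenvalues i) := by
  simp [hA.cfc_eq, IsHermitian.cfc, -Unitary.conjStarAlgAut_apply]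

theorem Matrix.IsHermitian.det_one_add_smul_sub_one {A : Matrix n n ℝ} (hA : A.IsHermitian)
    (c : ℝ) : (1 + c • (A - 1)).det = ∏ i, (1 + c * (hA.eigenvalues i - 1)) := by
  have hA' : IsSelfAdjoint A := hA
  rw [← hA.det_cfc (fun x => 1 + c * (x - 1)), cfc_const_add 1 (fun x => c * (x - 1)) A,
    cfc_const_mul c (fun x => x - 1) A, cfc_sub (fun x => x) (fun _ => 1) A, cfc_id' ℝ A,
    cfc_const_one ℝ A, map_one]

theorem Matrix.IsHermitian.abs_eigenvalues_sub_one_le {A : Matrix n n ℝ} (hA : A.IsHermitian)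
    (i : n) : |hA.eigenvalues i - 1| ≤ ‖A - 1‖ := by
  have hv : ‖hA.eigenvectorBasis i‖ = 1 := hA.eigenvectorBasis.orthonormal.1 i
  have hmul : (A - 1) *ᵥ hA.eigenvectorBasis i =
      (hA.eigenvalues i - 1) • hA.eigenvectorBasis i := by
    rw [sub_mulVec, hA.mulVec_eigenvectorBasis, one_mulVec, sub_smul, one_smul]
    rfl
  simpa [hmul, norm_smul, hv] using (A - 1).l2_opNorm_mulVec (hA.eigenvectorBasis i)

theorem Matrix.IsHermitian.posDef_of_norm_sub_one_lt_one {A : Matrix n n ℝ} (hA : A.IsHermitian)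
    (h : ‖A - 1‖ < 1) : A.PosDef :=
  hA.posDef_iff_eigenvalues_pos.mpr fun i => by
    linarith [(abs_le.mp (hA.abs_eigenvalues_sub_one_le i)).1]

theorem Matrix.IsHermitian.det_le_pow_mul_det_one_add_smul_sub_one {A : Matrix n n ℝ}
    (hA : A.IsHermitian) (hA1 : ‖A - 1‖ ≤ 0.1) {ν : ℝ} (hν : 1 ≤ ν) (hν' : ν ≤ 2) :
    A.det ≤ (1 + (ν - 1) / 8) ^ Fintype.card n * (1 + ν • (A - 1)).det := by
  have hev i : |hA.eigenvalues i - 1| ≤ 0.1 := (hA.abs_eigenvalues_sub_one_le i).trans hA1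
  rw [hA.det_eq_prod_eigenvalues, hA.det_one_add_smul_sub_one, ← Finset.card_univ,
    ← Finset.prod_const, ← Finset.prod_mul_distrib]
  simp only [RCLike.ofReal_real_eq_id, id_eq]
  exact Finset.prod_le_prod (fun i _ => by linarith [(abs_le.mp (hev i)).1])
    fun i _ => le_mul_one_add_mul_sub_one (hev i) hν hν'

end Hermitian

theorem LinearMap.det_prodMap_smul_id {R M N : Type*} [CommRing R] [AddCommGroup M] [Module R M]
    [AddCommGroup N] [Module R N] [Module.Free R M] [Module.Finite R M] [Module.Free R N]
    [Module.Finite R N] (a b : R) :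
    ((a • LinearMap.id : M →ₗ[R] M).prodMap (b • LinearMap.id : N →ₗ[R] N)).det =
      a ^ Module.finrank R M * b ^ Module.finrank R N := by
  rw [LinearMap.det_prodMap, LinearMap.det_smul, LinearMap.det_smul, LinearMap.det_id,
    LinearMap.det_id, mul_one, mul_one]

section Coordinates

variable {d : ℕ}

theorem card_UT_le (d : ℕ) : Fintype.card (UT d) ≤ d ^ 2 := by
  simpa [sq] using Fintype.card_subtype_le fun p : Fin d × Fin d => p.1 ≤ p.2

variable (d) in
def symmOfUT : (UT d → ℝ) →ₗ[ℝ] Matrix (Fin d) (Fin d) ℝ where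
  toFun y := Matrix.of fun i j => if h : i ≤ j then y ⟨(i, j), h⟩ else y ⟨(j, i), le_of_not_ge h⟩
  map_add' y z := by
    ext i j
    simp only [Matrix.of_apply, Matrix.add_apply, Pi.add_apply]
    split_ifs <;> rfl
  map_smul' c y := by
    ext i j
    simp only [Matrix.of_apply, Matrix.smul_apply, Pi.smul_apply, RingHom.id_apply]
    split_ifs <;> rfl

theorem detAt_eq_det_symmOfUT (θ : (Fin d → ℝ) × (UT d → ℝ)) :
    detAt θ = (symmOfUT d θ.2).det := rfl

theorem isHermitian_symmOfUT (y : UT d → ℝ) : (symmOfUT d y).IsHermitian := by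
  ext i j
  simp only [symmOfUT, LinearMap.coe_mk, AddHom.coe_mk, conjTranspose_apply, star_trivial,
    of_apply]
  rcases lt_trichotomy i j with h | rfl | h
  · rw [dif_neg h.not_ge, dif_pos h.le]
  · rfl
  · rw [dif_pos h.le, dif_neg h.not_ge]

theorem symmOfUT_proj_snd {q : (Fin d → ℝ) × Matrix (Fin d) (Fin d) ℝ} (hq : q.2.IsHermitian) :
    symmOfUT d (proj q).2 = q.2 := by
  ext i j
  simp only [symmOfUT, proj, LinearMap.coe_mk, AddHom.coe_mk, of_apply]
  split_ifs
  · rfl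
  · exact hq.apply i j

theorem proj_symmOfUT (x : Fin d → ℝ) (y : UT d → ℝ) : proj (x, symmOfUT d y) = (x, y) := by
  ext p
  · rfl
  · simp [proj, symmOfUT, p.2]

open scoped MatrixOrder in
theorem approx_zero_one_iff (γ ρ τ : ℝ) (p : (Fin d → ℝ) × Matrix (Fin d) (Fin d) ℝ) :
    approx γ ρ τ p (0, 1) ↔ opNorm (p.2 - 1) ≤ γ ∧ frobNorm (p.2 - 1) ≤ ρ ∧ vnorm p.1 ≤ τ := by
  have hsqrtInv : sqrtInv (1 : Matrix (Fin d) (Fin d) ℝ) = 1 := by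
    rw [sqrtInv, msqrt, dif_pos PosSemidef.one, CFC.sqrt_one, inv_one]
  simp [approx, hsqrtInv]

variable (d) in
def approxCoords (γ ρ τ : ℝ) : Set ((Fin d → ℝ) × (UT d → ℝ)) :=
  {θ | opNorm (symmOfUT d θ.2 - 1) ≤ γ ∧ frobNorm (symmOfUT d θ.2 - 1) ≤ ρ ∧ vnorm θ.1 ≤ τ}

theorem proj_image_approx_zero_one {γ : ℝ} (hγ : γ < 1) (ρ τ : ℝ) :
    proj '' {p : (Fin d → ℝ) × Matrix (Fin d) (Fin d) ℝ | p.2.PosDef ∧ approx γ ρ τ p (0, 1)} =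
      approxCoords d γ ρ τ := by
  ext θ
  constructor
  · rintro ⟨p, ⟨hp, happrox⟩, rfl⟩
    rw [approx_zero_one_iff] at happrox
    rwa [approxCoords, Set.mem_ofPred_eq, symmOfUT_proj_snd hp.isHermitian]
  · intro hθ
    refine ⟨(θ.1, symmOfUT d θ.2), ⟨?_, (approx_zero_one_iff γ ρ τ _).mpr hθ⟩, proj_symmOfUT _ _⟩
    exact (isHermitian_symmOfUT θ.2).posDef_of_norm_sub_one_lt_one (hθ.1.trans_lt hγ)

theorem continuous_frobNorm : Continuous (frobNorm : Matrix (Fin d) (Fin d) ℝ → ℝ) := by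
  unfold frobNorm
  fun_prop

theorem continuous_vnorm : Continuous (vnorm : (Fin d → ℝ) → ℝ) := by
  unfold vnorm
  fun_prop

theorem measurableSet_approxCoords (γ ρ τ : ℝ) : MeasurableSet (approxCoords d γ ρ τ) := by
  have hsymm : Continuous fun θ : (Fin d → ℝ) × (UT d → ℝ) => symmOfUT d θ.2 - 1 :=
    ((symmOfUT d).continuous_of_finiteDimensional.comp continuous_snd).sub continuous_const
  refine (IsClosed.inter ?_ (IsClosed.inter ?_ ?_)).measurableSet
  · exact isClosed_le (continuous_norm.comp hsymm) continuous_const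
  · exact isClosed_le (continuous_frobNorm.comp hsymm) continuous_const
  · exact isClosed_le (continuous_vnorm.comp continuous_fst) continuous_const

end Coordinates

section Dilation

variable {d : ℕ} {ν₁ ν₂ : ℝ}

variable (ν₁ ν₂) in
def dilate (θ : (Fin d → ℝ) × (UT d → ℝ)) : (Fin d → ℝ) × (UT d → ℝ) :=
  (ν₂ • θ.1, (proj (0, 1)).2 + ν₁ • (θ.2 - (proj (0, 1)).2))

theorem dilate_fst (θ : (Fin d → ℝ) × (UT d → ℝ)) : (dilate ν₁ ν₂ θ).1 = ν₂ • θ.1 := rfl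

theorem symmOfUT_dilate_snd (θ : (Fin d → ℝ) × (UT d → ℝ)) :
    symmOfUT d (dilate ν₁ ν₂ θ).2 = 1 + ν₁ • (symmOfUT d θ.2 - 1) := by
  simp [dilate, symmOfUT_proj_snd (q := (0, 1)) isHermitian_one]

theorem dilate_inv_dilate (h₁ : ν₁ ≠ 0) (h₂ : ν₂ ≠ 0) (θ : (Fin d → ℝ) × (UT d → ℝ)) :
    dilate ν₁⁻¹ ν₂⁻¹ (dilate ν₁ ν₂ θ) = θ := by
  simp [dilate, smul_smul, h₁, h₂]

theorem dilate_injective (h₁ : ν₁ ≠ 0) (h₂ : ν₂ ≠ 0) :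
    Function.Injective (dilate (d := d) ν₁ ν₂) :=
  Function.LeftInverse.injective (dilate_inv_dilate h₁ h₂)

theorem dilate_mem_approxCoords_iff (h₁ : 0 < ν₁) (h₂ : 0 < ν₂) {γ ρ τ : ℝ}
    {θ : (Fin d → ℝ) × (UT d → ℝ)} :
    dilate ν₁ ν₂ θ ∈ approxCoords d (ν₁ * γ) (ν₁ * ρ) (ν₂ * τ) ↔ θ ∈ approxCoords d γ ρ τ := by
  simp only [approxCoords, Set.mem_ofPred_eq, dilate_fst, symmOfUT_dilate_snd,
    add_sub_cancel_left, opNorm_smul, frobNorm_smul, vnorm_smul, abs_of_pos h₁, abs_of_pos h₂,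
    mul_le_mul_iff_right₀ h₁, mul_le_mul_iff_right₀ h₂]

theorem image_dilate_approxCoords (h₁ : 0 < ν₁) (h₂ : 0 < ν₂) (γ ρ τ : ℝ) :
    dilate ν₁ ν₂ '' approxCoords d γ ρ τ = approxCoords d (ν₁ * γ) (ν₁ * ρ) (ν₂ * τ) := by
  ext θ
  constructor
  · rintro ⟨θ, hθ, rfl⟩
    exact (dilate_mem_approxCoords_iff h₁ h₂).mpr hθ
  · intro hθ
    have hθ' : dilate ν₁ ν₂ (dilate ν₁⁻¹ ν₂⁻¹ θ) = θ := by
      simpa using dilate_inv_dilate (inv_ne_zero h₁.ne') (inv_ne_zero h₂.ne') θ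
    refine ⟨_, (dilate_mem_approxCoords_iff h₁ h₂).mp ?_, hθ'⟩
    rwa [hθ']

variable (ν₁ ν₂) in
theorem hasFDerivAt_dilate (θ : (Fin d → ℝ) × (UT d → ℝ)) :
    HasFDerivAt (dilate ν₁ ν₂)
      ((ν₂ • ContinuousLinearMap.id ℝ (Fin d → ℝ)).prodMap
        (ν₁ • ContinuousLinearMap.id ℝ (UT d → ℝ))) θ := by
  set c : (Fin d → ℝ) × (UT d → ℝ) := (0, (proj (0, 1)).2)
  set L := (ν₂ • ContinuousLinearMap.id ℝ (Fin d → ℝ)).prodMap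
    (ν₁ • ContinuousLinearMap.id ℝ (UT d → ℝ))
  have hdilate : dilate ν₁ ν₂ = fun θ => c + L (θ - c) := by
    funext θ
    refine Prod.ext ?_ ?_ <;> simp [dilate, c, L]
  rw [hdilate]
  simpa using ((L.hasFDerivAt.comp θ ((hasFDerivAt_id θ).sub_const c)).const_add c)

theorem abs_det_dilate_derivative_le (h₁ : 1 ≤ ν₁) (h₂ : 0 ≤ ν₂) :
    |((ν₂ • ContinuousLinearMap.id ℝ (Fin d → ℝ)).prodMap
        (ν₁ • ContinuousLinearMap.id ℝ (UT d → ℝ))).det| ≤ ν₂ ^ d * ν₁ ^ d ^ 2 := by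
  rw [ContinuousLinearMap.det, ContinuousLinearMap.coe_prodMap,
    ContinuousLinearMap.toLinearMap_smul, ContinuousLinearMap.toLinearMap_smul,
    ContinuousLinearMap.coe_id, ContinuousLinearMap.coe_id, LinearMap.det_prodMap_smul_id,
    Module.finrank_fin_fun, Module.finrank_pi, abs_of_nonneg (by positivity)]
  gcongr
  exact card_UT_le d

end Dilation

theorem ofReal_detAt_dilate_rpow_le {d : ℕ} {ν₁ : ℝ} (hν₁ : 1 ≤ ν₁) (hν₁' : ν₁ ≤ 2) (ν₂ : ℝ)
    {θ : (Fin d → ℝ) × (UT d → ℝ)} (hθ : opNorm (symmOfUT d θ.2 - 1) ≤ 0.1) :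
    ENNReal.ofReal (detAt (dilate ν₁ ν₂ θ) ^ (-((d : ℝ) + 2) / 2)) ≤
      ENNReal.ofReal (ν₁ ^ d ^ 2) * ENNReal.ofReal (detAt θ ^ (-((d : ℝ) + 2) / 2)) := by
  have hA := isHermitian_symmOfUT θ.2
  have hdet : 0 < (symmOfUT d θ.2).det :=
    (hA.posDef_of_norm_sub_one_lt_one (hθ.trans_lt (by norm_num))).det_pos
  have hle := hA.det_le_pow_mul_det_one_add_smul_sub_one hθ hν₁ hν₁'
  rw [Fintype.card_fin] at hle
  rw [← ENNReal.ofReal_mul (by positivity), detAt_eq_det_symmOfUT, detAt_eq_det_symmOfUT,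
    symmOfUT_dilate_snd, neg_div]
  refine ENNReal.ofReal_le_ofReal ?_
  calc _ ≤ ((1 + (ν₁ - 1) / 8) ^ d) ^ (d + 1) * (symmOfUT d θ.2).det ^ (-(((d : ℝ) + 2) / 2)) :=
        rpow_neg_le_pow_mul_rpow_neg hdet hle (one_le_pow₀ (by linarith)) (by positivity)
          (by push_cast; linarith)
    _ ≤ ν₁ ^ d ^ 2 * (symmOfUT d θ.2).det ^ (-(((d : ℝ) + 2) / 2)) := by
        rw [← pow_mul]
        gcongr
        exact pow_mul_succ_le_pow_sq (by linarith) (by nlinarith) d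

instance (d : ℕ) : (volume : Measure ((Fin d → ℝ) × (UT d → ℝ))).IsAddHaarMeasure :=
  Measure.prod.instIsAddHaarMeasure volume volume

theorem nvol_dilation_ratio_general (d : ℕ) (γ τ : ℝ) (hγ0 : 0 < γ) (hγ : γ ≤ 0.1)
    (ν₁ ν₂ : ℝ) (hν₁ : 1 ≤ ν₁) (hν₁' : ν₁ ≤ 2) (hν₂ : 1 ≤ ν₂) :
    nvol {p : (Fin d → ℝ) × Matrix (Fin d) (Fin d) ℝ |
        p.2.PosDef ∧ approx (ν₁ * γ) (Real.sqrt d * (ν₁ * γ)) (ν₂ * τ) p (0, 1)} ≤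
      ENNReal.ofReal (ν₁ ^ (2 * d ^ 2) * ν₂ ^ d) *
        nvol {p : (Fin d → ℝ) × Matrix (Fin d) (Fin d) ℝ |
          p.2.PosDef ∧ approx γ (Real.sqrt d * γ) τ p (0, 1)} := by
  have h₁ : 0 < ν₁ := by linarith
  have h₂ : 0 < ν₂ := by linarith
  have hS := measurableSet_approxCoords (d := d) γ (√d * γ) τ
  rw [nvol, nvol, proj_image_approx_zero_one (by nlinarith),
    proj_image_approx_zero_one (by linarith), mul_left_comm, ← image_dilate_approxCoords h₁ h₂,
    lintegral_image_eq_lintegral_abs_det_fderiv_mul volume hS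
      (fun θ _ => (hasFDerivAt_dilate ν₁ ν₂ θ).hasFDerivWithinAt)
      (dilate_injective h₁.ne' h₂.ne').injOn,
    ← lintegral_const_mul' _ _ ENNReal.ofReal_ne_top]
  refine setLIntegral_mono' hS fun θ hθ => ?_
  calc _ ≤ ENNReal.ofReal (ν₂ ^ d * ν₁ ^ d ^ 2) *
        (ENNReal.ofReal (ν₁ ^ d ^ 2) * ENNReal.ofReal (detAt θ ^ (-((d : ℝ) + 2) / 2))) := by
        gcongr
        · exact abs_det_dilate_derivative_le hν₁ h₂.le
        · exact ofReal_detAt_dilate_rpow_le hν₁ hν₁' ν₂ (hθ.1.trans hγ)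
    _ = _ := by
        rw [← mul_assoc, ← ENNReal.ofReal_mul (by positivity)]
        ring_nf

/-- Lemma: normalized-volume ratio of dilated approximation neighborhoods of `(0, I)`. -/
theorem nvol_dilation_ratio (d : ℕ) (γ τ : ℝ) (hγ0 : 0 < γ) (hγ : γ ≤ 0.1)
    (hτ0 : 0 < τ) (hτ : τ ≤ 0.1)
    (ν₁ ν₂ : ℝ) (hν₁ : 1 ≤ ν₁) (hν₁' : ν₁ ≤ 2) (hν₂ : 1 ≤ ν₂) :
    nvol {p : (Fin d → ℝ) × Matrix (Fin d) (Fin d) ℝ |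
        p.2.PosDef ∧ approx (ν₁ * γ) (Real.sqrt d * (ν₁ * γ)) (ν₂ * τ) p (0, 1)} ≤
      ENNReal.ofReal (ν₁ ^ (2 * d ^ 2) * ν₂ ^ d) *
        nvol {p : (Fin d → ℝ) × Matrix (Fin d) (Fin d) ℝ |
          p.2.PosDef ∧ approx γ (Real.sqrt d * γ) τ p (0, 1)} :=
  nvol_dilation_ratio_general d γ τ hγ0 hγ ν₁ ν₂ hν₁ hν₁' hν₂
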